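/- Let X | μ ~ N(μ, σ²) with μ ~ G, and let f(x) = ∫ φ_σ(x − μ) dG(μ) and F(t) = ∫_{−∞}^t f(x) dx denote the marginal density and CDF. Then for any t with F(t) < 1, the expected selection bias of the naive estimator X on the event {X > t} is E[X − μ | X > t] = σ² f(t)/(1 − F(t)). -/

import Mathlib

/-!
Since `∂ₓ φ_σ(x - μ) = -(x - μ) φ_σ(x - μ) / σ²`, the tail integral
`∫_{x > t} (x - μ) φ_σ(x - μ) dx` is the boundary term `σ² φ_σ(t - μ)`.
Integrating over `μ ~ G` turns the numerator `E[(X - μ) 1{X > t}]` into `σ² f(t)`.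
-/

open MeasureTheory Real

noncomputable def gaussianPdf (σ z : ℝ) : ℝ :=
  (Real.sqrt (2 * Real.pi * σ ^ 2))⁻¹ * Real.exp (-(z ^ 2) / (2 * σ ^ 2))

open Filter Topology

theorem hasDerivAt_gaussianPdf (σ z : ℝ) :
    HasDerivAt (gaussianPdf σ) (-(z / σ ^ 2) * gaussianPdf σ z) z := by
  have hexponent : HasDerivAt (fun z : ℝ => -(z ^ 2) / (2 * σ ^ 2)) (-(z / σ ^ 2)) z := by
    refine ((hasDerivAt_pow 2 z).neg.div_const (2 * σ ^ 2)).congr_deriv ?_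
    norm_num
    ring
  refine (hexponent.exp.const_mul (Real.sqrt (2 * Real.pi * σ ^ 2))⁻¹).congr_deriv ?_
  rw [gaussianPdf]
  ring

theorem tendsto_gaussianPdf_atTop {σ : ℝ} (hσ : σ ≠ 0) :
    Tendsto (gaussianPdf σ) atTop (𝓝 0) := by
  have hexponent : Tendsto (fun z : ℝ => -(z ^ 2) / (2 * σ ^ 2)) atTop atBot :=
    (tendsto_neg_atTop_atBot.comp (tendsto_pow_atTop two_ne_zero)).atBot_div_const
      (by positivity)
  rw [← mul_zero (Real.sqrt (2 * Real.pi * σ ^ 2))⁻¹]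
  exact (tendsto_exp_atBot.comp hexponent).const_mul _

theorem integrable_mul_gaussianPdf {σ : ℝ} (hσ : σ ≠ 0) :
    Integrable fun z => z * gaussianPdf σ z := by
  have hb : 0 < (2 * σ ^ 2)⁻¹ := by positivity
  refine ((integrable_mul_exp_neg_mul_sq hb).const_mul
    (Real.sqrt (2 * Real.pi * σ ^ 2))⁻¹).congr (ae_of_all _ fun z => ?_)
  simp only [gaussianPdf]
  ring_nf

theorem integral_Ioi_sub_mul_gaussianPdf {σ : ℝ} (hσ : σ ≠ 0) (t μ : ℝ) :
    ∫ x in Set.Ioi t, (x - μ) * gaussianPdf σ (x - μ) = σ ^ 2 * gaussianPdf σ (t - μ) := by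
  have hderiv : ∀ x ∈ Set.Ici t, HasDerivAt (fun x => -σ ^ 2 * gaussianPdf σ (x - μ))
      ((x - μ) * gaussianPdf σ (x - μ)) x := fun x _ => by
    refine (((hasDerivAt_gaussianPdf σ (x - μ)).comp x
      ((hasDerivAt_id x).sub_const μ)).const_mul (-σ ^ 2)).congr_deriv ?_
    field_simp
  have htendsto : Tendsto (fun x => -σ ^ 2 * gaussianPdf σ (x - μ)) atTop (𝓝 0) := by
    rw [← mul_zero (-σ ^ 2)]
    exact ((tendsto_gaussianPdf_atTop hσ).comp
      (tendsto_atTop_add_const_right _ (-μ) tendsto_id)).const_mul _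
  have hint : IntegrableOn (fun x => (x - μ) * gaussianPdf σ (x - μ)) (Set.Ioi t) :=
    ((integrable_mul_gaussianPdf hσ).comp_sub_right μ).integrableOn
  rw [integral_Ioi_of_hasDerivAt_of_tendsto' hderiv hint htendsto]
  ring

theorem selection_bias_naive_general
    (G : Measure ℝ) (σ t : ℝ) (hσ : 0 < σ)
    (f F : ℝ → ℝ)
    (hf : ∀ y, f y = ∫ μ, gaussianPdf σ (y - μ) ∂G) :
    (∫ μ, (∫ x in Set.Ioi t, (x - μ) * gaussianPdf σ (x - μ)) ∂G) / (1 - F t)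
      = σ ^ 2 * f t / (1 - F t) := by
  simp_rw [integral_Ioi_sub_mul_gaussianPdf hσ.ne', integral_const_mul, hf]

/-- **Selection bias of the naive estimator.** For `X | μ ~ N(μ, σ²)`, `μ ~ G`,
with marginal density `f` and CDF `F`, for any `t` with `F t < 1`,
`E[X − μ | X > t] = σ² f(t) / (1 − F t)`.  The conditional expectation is the
joint integral over `{X > t}` normalized by `P(X > t) = 1 − F t`. -/
theorem selection_bias_naive
    (G : Measure ℝ) [IsProbabilityMeasure G] (σ t : ℝ) (hσ : 0 < σ)
    (f F : ℝ → ℝ)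
    (hf : ∀ y, f y = ∫ μ, gaussianPdf σ (y - μ) ∂G)
    (hF : ∀ s, F s = ∫ x in Set.Iic s, f x)
    (hFt : F t < 1)
    (hint : Integrable (fun μ => ∫ x in Set.Ioi t, (x - μ) * gaussianPdf σ (x - μ)) G)
    (hint' : ∀ μ : ℝ, Integrable (fun x => (x - μ) * gaussianPdf σ (x - μ))
      (volume.restrict (Set.Ioi t))) :
    (∫ μ, (∫ x in Set.Ioi t, (x - μ) * gaussianPdf σ (x - μ)) ∂G) / (1 - F t)
      = σ ^ 2 * f t / (1 - F t) :=
  selection_bias_naive_general G σ t hσ f F hf
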